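/- Let y ∈ ℂⁿ ∖ {0} be such that 𝔨₁ := {ξ ∈ 𝔨 : ξy = 0} is a nonzero proper subspace of 𝔨, let 𝔨₂ := 𝔨₁^⊥ be its orthogonal complement in 𝔨, let P₁ and P₂ be the orthogonal projections of 𝔨 onto 𝔨₁ and 𝔨₂, and set f_i := ‖P_i ∘ μ‖² for i = 1, 2. Then there exist an open neighbourhood U of y/‖y‖ in ℂⁿ and a constant c > 0 such that ‖∇f(x)‖ ≥ c·(‖∇f₁(x)‖ + ‖∇f₂(x)‖) for all x ∈ ℂⁿ ∖ {0} with x/‖x‖ ∈ U. -/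

import Mathlib

open scoped Matrix

noncomputable section

/-- Matrix-vector multiplication, viewed as a map on Euclidean space
(the fundamental vector field of a linear action). -/
def mulVecE {n : ℕ} (ξ : Matrix (Fin n) (Fin n) ℂ) (x : EuclideanSpace ℂ (Fin n)) :
    EuclideanSpace ℂ (Fin n) :=
  (WithLp.equiv 2 (Fin n → ℂ)).symm (ξ.mulVec (WithLp.equiv 2 (Fin n → ℂ) x))

/-- The real Frobenius inner product `⟪ξ,η⟫ = Re (tr (ξᴴ η))` on complex matrices. -/
def innK {n : ℕ} (ξ η : Matrix (Fin n) (Fin n) ℂ) : ℝ :=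
  (Matrix.trace (ξᴴ * η)).re

/-!
The gradient of `x ↦ ⟪μ(x), ξ⟫` is `i ξ x` (as `ξ` is skew-adjoint), so `∇f₁ = 2 i ξ₁ x` and
`∇f₂ = 2 i ξ₂ x` with `ξⱼ = Pⱼ μ(x)`, and `∇f = ∇f₁ + ∇f₂`. Everything rests on the cross term
`Re ⟪ξ₁ x, ξ₂ x⟫`. Since `ξ₁` is skew, commutes with `ξ₂` and kills `y`, this term does not change
when `x` is replaced by `x - t y`, so it is at most `‖ξ₁ x‖ ‖ξ₂‖ ‖x - t y‖`. On `𝔨₂` the map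
`ξ ↦ ξ y` is injective, so `‖ξ₂‖ ≤ C ‖ξ₂ ŷ‖` with `ŷ = y / ‖y‖`. Hence when `x / ‖x‖` lies within
`1 / (3C)` of `ŷ`, the cross term is at most `‖ξ₁ x‖ ‖ξ₂ x‖ / 2`. Then
`‖ξ₁ x + ξ₂ x‖ ≥ (‖ξ₁ x‖ + ‖ξ₂ x‖) / 2`, which gives `c = 1/2`.
-/

open scoped InnerProductSpace InnerProduct

section GradientCalculus

variable {E K : Type*} [NormedAddCommGroup E] [InnerProductSpace ℝ E] [CompleteSpace E]
  [NormedAddCommGroup K] [InnerProductSpace ℝ K] [FiniteDimensional ℝ K]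

theorem LinearMap.IsSymmetric.hasGradientAt_half_inner_self_sub {T : E →L[ℝ] E}
    (hT : (T : E →ₗ[ℝ] E).IsSymmetric) (c : ℝ) (x : E) :
    HasGradientAt (fun z => (1 / 2) * ⟪T z, z⟫_ℝ - c) (T x) x := by
  have h := ((hT.hasStrictFDerivAt_reApplyInnerSelf x).hasFDerivAt.const_mul (1 / 2)).sub_const c
  rw [hasGradientAt_iff_hasFDerivAt]
  refine h.congr_fderiv ?_
  ext v
  simp [real_inner_comm]

theorem hasGradientAt_norm_sq_of_hasGradientAt_inner {m : E → K} {A : K →ₗ[ℝ] E} {x : E}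
    (h : ∀ ξ, HasGradientAt (fun z => ⟪m z, ξ⟫_ℝ) (A ξ) x) :
    HasGradientAt (fun z => ‖m z‖ ^ 2) ((2 : ℝ) • A (m x)) x := by
  let b := stdOrthonormalBasis ℝ K
  have hsq : (fun z => ‖m z‖ ^ 2) = ∑ i, fun z => ⟪m z, b i⟫_ℝ ^ 2 := by
    ext z
    simp only [Finset.sum_apply, b.sum_sq_inner_left]
  have hA : (2 : ℝ) • A (m x) = ∑ i, (2 * ⟪m x, b i⟫_ℝ) • A (b i) := by
    conv_lhs => rw [← b.sum_repr' (m x)]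
    simp only [map_sum, map_smul, Finset.smul_sum, smul_smul, real_inner_comm]
  rw [hsq, hA, hasGradientAt_iff_hasFDerivAt, map_sum]
  refine HasFDerivAt.sum fun i _ => ?_
  refine ((h (b i)).hasFDerivAt.pow 2).congr_fderiv ?_
  rw [map_smul]
  norm_num

end GradientCalculus

section CrossTerm

variable {𝕜 E : Type*} [RCLike 𝕜] [NormedAddCommGroup E] [InnerProductSpace 𝕜 E]

theorem norm_add_norm_le_two_mul_norm_add {a b : E}
    (h : |RCLike.re ⟪a, b⟫_𝕜| ≤ ‖a‖ * ‖b‖ / 2) : ‖a‖ + ‖b‖ ≤ 2 * ‖a + b‖ := by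
  have hsq := norm_add_sq (𝕜 := 𝕜) a b
  have hlow := neg_abs_le (RCLike.re ⟪a, b⟫_𝕜)
  rw [← pow_le_pow_iff_left₀ (by positivity) (by positivity) two_ne_zero]
  nlinarith [sq_nonneg (‖a‖ - ‖b‖), norm_nonneg a, norm_nonneg b]

theorem abs_re_inner_apply_le_of_adjoint_eq_neg [CompleteSpace E] {T₁ T₂ : E →L[𝕜] E}
    (hskew : T₁† = -T₁) (hcomm : Commute T₁ T₂) {x y : E} (hy : T₁ y = 0)
    (hx : 3 * ‖T₂‖ * ‖x - y‖ ≤ ‖T₂ y‖) :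
    |RCLike.re ⟪T₁ x, T₂ x⟫_𝕜| ≤ ‖T₁ x‖ * ‖T₂ x‖ / 2 := by
  have hperp : ⟪T₁ x, T₂ y⟫_𝕜 = 0 := by
    have hswap : T₁ (T₂ y) = T₂ (T₁ y) := congr($(hcomm.eq) y)
    rw [← ContinuousLinearMap.adjoint_inner_right, hskew, neg_apply, hswap,
      hy, map_zero, neg_zero, inner_zero_right]
  have hshift : ⟪T₁ x, T₂ x⟫_𝕜 = ⟪T₁ x, T₂ (x - y)⟫_𝕜 := by
    rw [map_sub, inner_sub_right, hperp, sub_zero]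
  have hTx : 2 * (‖T₂‖ * ‖x - y‖) ≤ ‖T₂ x‖ := by
    have htri := norm_sub_le (T₂ x) (T₂ (x - y))
    rw [← map_sub, sub_sub_cancel] at htri
    linarith [T₂.le_opNorm (x - y)]
  calc |RCLike.re ⟪T₁ x, T₂ x⟫_𝕜|
      ≤ ‖T₁ x‖ * ‖T₂ (x - y)‖ := hshift ▸ (RCLike.abs_re_le_norm _).trans (norm_inner_le_norm _ _)
    _ ≤ ‖T₁ x‖ * (‖T₂‖ * ‖x - y‖) := by gcongr; exact T₂.le_opNorm _
    _ ≤ ‖T₁ x‖ * ‖T₂ x‖ / 2 := by nlinarith [norm_nonneg (T₁ x)]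

end CrossTerm

theorem Submodule.exists_pos_norm_le_mul_norm_of_injOn {V W G : Type*}
    [NormedAddCommGroup V] [NormedSpace ℝ V] [FiniteDimensional ℝ V]
    [NormedAddCommGroup W] [NormedSpace ℝ W] [NormedAddCommGroup G] [NormedSpace ℝ G]
    (Φ : V →ₗ[ℝ] W) {L : V →ₗ[ℝ] G} {U : Submodule ℝ V} (hL : ∀ v ∈ U, L v = 0 → v = 0) :
    ∃ C > 0, ∀ v ∈ U, ‖Φ v‖ ≤ C * ‖L v‖ := by
  have hker : LinearMap.ker (L ∘ₗ U.subtype) = ⊥ :=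
    (Submodule.eq_bot_iff _).mpr fun v hv => Subtype.ext (hL v v.2 hv)
  obtain ⟨C, hC, hanti⟩ := (L ∘ₗ U.subtype).exists_antilipschitzWith hker
  let Φc := (Φ ∘ₗ U.subtype).toContinuousLinearMap
  refine ⟨‖Φc‖ * C + 1, by positivity, fun v hv => ?_⟩
  have hv' : ‖v‖ ≤ C * ‖L v‖ := hanti.le_mul_norm (map_zero _) (⟨v, hv⟩ : U)
  calc ‖Φ v‖ = ‖Φc ⟨v, hv⟩‖ := rfl
    _ ≤ ‖Φc‖ * ‖v‖ := Φc.le_opNorm _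
    _ ≤ ‖Φc‖ * (C * ‖L v‖) := by gcongr
    _ ≤ (‖Φc‖ * C + 1) * ‖L v‖ := by nlinarith [norm_nonneg (L v)]

theorem EuclideanSpace.real_inner_eq_re_inner {ι : Type*} [Fintype ι]
    (x y : EuclideanSpace ℂ ι) : ⟪x, y⟫_ℝ = (⟪x, y⟫_ℂ).re := by
  simp [PiLp.inner_apply, Complex.re_sum]

theorem EuclideanSpace.isSymmetric_I_smul_of_adjoint_eq_neg {ι : Type*} [Fintype ι]
    {T : EuclideanSpace ℂ ι →L[ℂ] EuclideanSpace ℂ ι} (hT : T† = -T) :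
    (((Complex.I • T).restrictScalars ℝ : EuclideanSpace ℂ ι →L[ℝ] EuclideanSpace ℂ ι) :
      EuclideanSpace ℂ ι →ₗ[ℝ] EuclideanSpace ℂ ι).IsSymmetric := by
  intro a b
  simp only [EuclideanSpace.real_inner_eq_re_inner, ContinuousLinearMap.coe_coe,
    ContinuousLinearMap.coe_restrictScalars', smul_apply, inner_smul_left,
    inner_smul_right, ← ContinuousLinearMap.adjoint_inner_right, hT,
    neg_apply, inner_neg_right, Complex.conj_I]
  simp

attribute [local instance] Matrix.frobeniusNormedAddCommGroup Matrix.frobeniusNormedSpace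

namespace Matrix

variable {m n : Type*} [Fintype m] [Fintype n]

theorem frobenius_norm_sq_eq_sum (ξ : Matrix m n ℂ) : ‖ξ‖ ^ 2 = ∑ i, ∑ j, ‖ξ i j‖ ^ 2 := by
  change ‖WithLp.toLp 2 fun i => WithLp.toLp 2 (ξ i)‖ ^ 2 = _
  simp [PiLp.norm_sq_eq_of_L2]

-- Built on `frobeniusNormedAddCommGroup` so that its topology is the product topology that
-- `Matrix` already carries.
abbrev frobeniusInnerProductSpace : InnerProductSpace ℝ (Matrix m n ℂ) where
  inner ξ η := (ξᴴ * η).trace.re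
  norm_sq_eq_re_inner ξ := by
    rw [frobenius_norm_sq_eq_sum, Finset.sum_comm]
    simp [trace, mul_apply, ← Complex.normSq_eq_norm_sq, Complex.normSq_apply, Complex.re_sum]
  conj_inner_symm ξ η := by
    rw [conj_trivial, ← Complex.conj_re, ← Complex.star_def, ← trace_conjTranspose,
      conjTranspose_mul, conjTranspose_conjTranspose]
  add_left ξ η ζ := by
    rw [conjTranspose_add, Matrix.add_mul, trace_add, Complex.add_re]
  smul_left ξ η r := by simp [conjTranspose_smul, Complex.real_smul]

end Matrix

attribute [local instance] Matrix.frobeniusInnerProductSpace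

variable {n : ℕ}

theorem real_inner_eq_innK (ξ η : Matrix (Fin n) (Fin n) ℂ) : ⟪ξ, η⟫_ℝ = innK ξ η := rfl

theorem innK_self_eq_norm_sq (ξ : Matrix (Fin n) (Fin n) ℂ) : innK ξ ξ = ‖ξ‖ ^ 2 := by
  rw [← real_inner_eq_innK, real_inner_self_eq_norm_sq]

theorem mulVecE_add (ξ η : Matrix (Fin n) (Fin n) ℂ) (x : EuclideanSpace ℂ (Fin n)) :
    mulVecE (ξ + η) x = mulVecE ξ x + mulVecE η x :=
  congr($(map_add (Matrix.toEuclideanCLM (𝕜 := ℂ)) ξ η) x)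

theorem mulVecE_real_smul (ξ : Matrix (Fin n) (Fin n) ℂ) (c : ℝ) (x : EuclideanSpace ℂ (Fin n)) :
    mulVecE ξ (c • x) = c • mulVecE ξ x :=
  (Matrix.toEuclideanCLM (𝕜 := ℂ) ξ).map_smul_of_tower c x

def mulVecEₗ (x : EuclideanSpace ℂ (Fin n)) :
    Matrix (Fin n) (Fin n) ℂ →ₗ[ℝ] EuclideanSpace ℂ (Fin n) where
  toFun ξ := mulVecE ξ x
  map_add' ξ η := mulVecE_add ξ η x
  map_smul' c ξ := by simp [mulVecE, Matrix.smul_mulVec]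

theorem Matrix.toEuclideanCLM_adjoint_eq_neg {ξ : Matrix (Fin n) (Fin n) ℂ} (hξ : ξᴴ = -ξ) :
    (Matrix.toEuclideanCLM (𝕜 := ℂ) ξ)† = -Matrix.toEuclideanCLM (𝕜 := ℂ) ξ := by
  rw [← ContinuousLinearMap.star_eq_adjoint, ← map_star, Matrix.star_eq_conjTranspose, hξ,
    map_neg]

theorem hasGradientAt_half_re_inner_I_mulVecE {ξ : Matrix (Fin n) (Fin n) ℂ} (hξ : ξᴴ = -ξ)
    (c : ℝ) (x : EuclideanSpace ℂ (Fin n)) :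
    HasGradientAt (fun z => (1 / 2) * (⟪Complex.I • mulVecE ξ z, z⟫_ℂ).re - c)
      (Complex.I • mulVecE ξ x) x := by
  have h := (EuclideanSpace.isSymmetric_I_smul_of_adjoint_eq_neg
    (Matrix.toEuclideanCLM_adjoint_eq_neg hξ)).hasGradientAt_half_inner_self_sub c x
  simp only [EuclideanSpace.real_inner_eq_re_inner] at h
  exact h

theorem norm_mulVecE_add_norm_mulVecE_le {ξ₁ ξ₂ : Matrix (Fin n) (Fin n) ℂ} (hskew : ξ₁ᴴ = -ξ₁)
    (hcomm : ξ₁ * ξ₂ = ξ₂ * ξ₁) {x v : EuclideanSpace ℂ (Fin n)} (hv : mulVecE ξ₁ v = 0)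
    (hx : 3 * ‖Matrix.toEuclideanCLM (𝕜 := ℂ) ξ₂‖ * ‖x - v‖ ≤ ‖mulVecE ξ₂ v‖) :
    ‖mulVecE ξ₁ x‖ + ‖mulVecE ξ₂ x‖ ≤ 2 * ‖mulVecE ξ₁ x + mulVecE ξ₂ x‖ :=
  norm_add_norm_le_two_mul_norm_add (𝕜 := ℂ) <| abs_re_inner_apply_le_of_adjoint_eq_neg
    (Matrix.toEuclideanCLM_adjoint_eq_neg hskew)
    (Commute.map (show Commute ξ₁ ξ₂ from hcomm) Matrix.toEuclideanCLM) hv hx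

theorem hasGradientAt_innK_self_of_sub_mem_orthogonal
    {𝔨 : Submodule ℝ (Matrix (Fin n) (Fin n) ℂ)} (hskew : ∀ ξ ∈ 𝔨, ξᴴ = -ξ)
    {α : Matrix (Fin n) (Fin n) ℂ} {μ : EuclideanSpace ℂ (Fin n) → Matrix (Fin n) (Fin n) ℂ}
    (hμ : ∀ x, ∀ ξ ∈ 𝔨,
      innK (μ x) ξ = (1 / 2) * (⟪Complex.I • mulVecE ξ x, x⟫_ℂ).re - innK α ξ)
    {S : Submodule ℝ (Matrix (Fin n) (Fin n) ℂ)} (hS : S ≤ 𝔨)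
    {q : EuclideanSpace ℂ (Fin n) → Matrix (Fin n) (Fin n) ℂ} (hqS : ∀ z, q z ∈ S)
    (hq : ∀ z, μ z - q z ∈ Sᗮ) (x : EuclideanSpace ℂ (Fin n)) :
    HasGradientAt (fun z => innK (q z) (q z)) ((2 : ℝ) • Complex.I • mulVecE (q x) x) x := by
  have hA (ξ : S) : HasGradientAt (fun z => ⟪(⟨q z, hqS z⟩ : S), ξ⟫_ℝ)
      ((Complex.I • (mulVecEₗ x ∘ₗ S.subtype)) ξ) x := by
    have hpair : (fun z => ⟪(⟨q z, hqS z⟩ : S), ξ⟫_ℝ) =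
        fun z => (1 / 2) * (⟪Complex.I • mulVecE ξ z, z⟫_ℂ).re - innK α ξ := by
      funext z
      have h := (Submodule.mem_orthogonal' S _).mp (hq z) ξ ξ.2
      rw [inner_sub_left, sub_eq_zero] at h
      rw [Submodule.coe_inner, ← h]
      exact hμ z ξ (hS ξ.2)
    rw [hpair]
    exact hasGradientAt_half_re_inner_I_mulVecE (hskew ξ (hS ξ.2)) _ x
  have h := hasGradientAt_norm_sq_of_hasGradientAt_inner hA
  simp only [innK_self_eq_norm_sq]
  exact h

def infinitesimalStabilizer (𝔨 : Submodule ℝ (Matrix (Fin n) (Fin n) ℂ))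
    (y : EuclideanSpace ℂ (Fin n)) : Submodule ℝ (Matrix (Fin n) (Fin n) ℂ) :=
  𝔨 ⊓ LinearMap.ker (mulVecEₗ y)

theorem mem_inf_orthogonal_infinitesimalStabilizer {𝔨 : Submodule ℝ (Matrix (Fin n) (Fin n) ℂ)}
    {y : EuclideanSpace ℂ (Fin n)} {η : Matrix (Fin n) (Fin n) ℂ} (hη : η ∈ 𝔨)
    (hperp : ∀ ζ ∈ 𝔨, mulVecE ζ y = 0 → innK η ζ = 0) :
    η ∈ 𝔨 ⊓ (infinitesimalStabilizer 𝔨 y)ᗮ :=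
  ⟨hη, fun ζ hζ => (real_inner_comm _ _).trans (hperp ζ hζ.1 hζ.2)⟩

theorem exists_norm_toEuclideanCLM_le_of_mem_inf_orthogonal
    (𝔨 : Submodule ℝ (Matrix (Fin n) (Fin n) ℂ)) {y : EuclideanSpace ℂ (Fin n)} (hy : y ≠ 0) :
    ∃ C > 0, ∀ ξ ∈ 𝔨 ⊓ (infinitesimalStabilizer 𝔨 y)ᗮ,
      ‖Matrix.toEuclideanCLM (𝕜 := ℂ) ξ‖ ≤ C * ‖mulVecE ξ (‖y‖⁻¹ • y)‖ := by
  refine Submodule.exists_pos_norm_le_mul_norm_of_injOn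
    ((Matrix.toEuclideanCLM (n := Fin n) (𝕜 := ℂ)).toAlgEquiv.toLinearMap.restrictScalars ℝ)
    (L := mulVecEₗ (‖y‖⁻¹ • y)) fun ξ hξ hξ₀ => ?_
  have hξy : mulVecE ξ y = 0 := by
    rw [← smul_inv_smul₀ (norm_ne_zero_iff.mpr hy) y, mulVecE_real_smul]
    exact smul_eq_zero_of_right _ hξ₀
  exact Submodule.disjoint_def.mp (infinitesimalStabilizer 𝔨 y).orthogonal_disjoint ξ
    ⟨hξ.1, hξy⟩ hξ.2

theorem three_mul_opNorm_mul_norm_sub_le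
    {T : EuclideanSpace ℂ (Fin n) →L[ℂ] EuclideanSpace ℂ (Fin n)} {u x : EuclideanSpace ℂ (Fin n)}
    {C : ℝ} (hC : 0 < C) (hT : ‖T‖ ≤ C * ‖T u‖) (hx : x ≠ 0)
    (hxu : ‖‖x‖⁻¹ • x - u‖ < (3 * C)⁻¹) :
    3 * ‖T‖ * ‖x - ‖x‖ • u‖ ≤ ‖T (‖x‖ • u)‖ := by
  have hx₀ : 0 < ‖x‖ := norm_pos_iff.mpr hx
  have hdist : ‖x - ‖x‖ • u‖ = ‖x‖ * ‖‖x‖⁻¹ • x - u‖ := by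
    rw [← norm_norm x, ← norm_smul, norm_norm, smul_sub, smul_inv_smul₀ hx₀.ne']
  rw [hdist, T.map_smul_of_tower, norm_smul, norm_norm]
  have h3 : 3 * C * ‖‖x‖⁻¹ • x - u‖ ≤ 1 := by
    rw [← le_div_iff₀' (by positivity), one_div]
    exact hxu.le
  calc 3 * ‖T‖ * (‖x‖ * ‖‖x‖⁻¹ • x - u‖)
      ≤ 3 * (C * ‖T u‖) * (‖x‖ * ‖‖x‖⁻¹ • x - u‖) := by gcongr
    _ = (3 * C * ‖‖x‖⁻¹ • x - u‖) * (‖x‖ * ‖T u‖) := by ring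
    _ ≤ ‖x‖ * ‖T u‖ := mul_le_of_le_one_left (by positivity) h3

theorem stmt12_general (n : ℕ) (𝔨 : Submodule ℝ (Matrix (Fin n) (Fin n) ℂ))
    (hskew : ∀ ξ ∈ 𝔨, ξᴴ = -ξ)
    (habelian : ∀ ξ ∈ 𝔨, ∀ η ∈ 𝔨, ξ * η = η * ξ)
    (α : Matrix (Fin n) (Fin n) ℂ)
    (μ : EuclideanSpace ℂ (Fin n) → Matrix (Fin n) (Fin n) ℂ)
    (hμmem : ∀ x, μ x ∈ 𝔨)
    (hμ : ∀ x, ∀ ξ ∈ 𝔨,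
      innK (μ x) ξ
        = (1/2) * (inner ℂ (Complex.I • mulVecE ξ x) x : ℂ).re - innK α ξ)
    (f : EuclideanSpace ℂ (Fin n) → ℝ)
    (hf : ∀ x, f x = innK (μ x) (μ x))
    (y : EuclideanSpace ℂ (Fin n)) (hy : y ≠ 0)
    -- `P₁, P₂` are the orthogonal projections of `𝔨` onto `𝔨₁` and onto `𝔨₂ = 𝔨₁^⊥`
    (P₁ P₂ : Matrix (Fin n) (Fin n) ℂ → Matrix (Fin n) (Fin n) ℂ)
    (hP₁mem : ∀ ξ ∈ 𝔨, P₁ ξ ∈ 𝔨)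
    (hP₁stab : ∀ ξ ∈ 𝔨, mulVecE (P₁ ξ) y = 0)
    (hP₂mem : ∀ ξ ∈ 𝔨, P₂ ξ ∈ 𝔨)
    (hP₂perp : ∀ ξ ∈ 𝔨, ∀ η ∈ 𝔨, mulVecE η y = 0 → innK (P₂ ξ) η = 0)
    (hP₁P₂ : ∀ ξ ∈ 𝔨, P₁ ξ + P₂ ξ = ξ)
    -- the norm-squares of the two projected moment maps
    (f₁ f₂ : EuclideanSpace ℂ (Fin n) → ℝ)
    (hf₁ : ∀ x, f₁ x = innK (P₁ (μ x)) (P₁ (μ x)))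
    (hf₂ : ∀ x, f₂ x = innK (P₂ (μ x)) (P₂ (μ x))) :
    ∃ U : Set (EuclideanSpace ℂ (Fin n)), IsOpen U ∧ ‖y‖⁻¹ • y ∈ U ∧
      ∃ c > (0:ℝ), ∀ x : EuclideanSpace ℂ (Fin n), x ≠ 0 → ‖x‖⁻¹ • x ∈ U →
        ‖gradient f x‖ ≥ c * (‖gradient f₁ x‖ + ‖gradient f₂ x‖) := by
  set 𝔨₁ := infinitesimalStabilizer 𝔨 y
  have hP₁ (x) : P₁ (μ x) ∈ 𝔨₁ := ⟨hP₁mem _ (hμmem x), hP₁stab _ (hμmem x)⟩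
  have hP₂ (x) : P₂ (μ x) ∈ 𝔨 ⊓ 𝔨₁ᗮ :=
    mem_inf_orthogonal_infinitesimalStabilizer (hP₂mem _ (hμmem x)) (hP₂perp _ (hμmem x))
  have hgrad₀ (x) : gradient f x =
      (2 : ℝ) • Complex.I • (mulVecE (P₁ (μ x)) x + mulVecE (P₂ (μ x)) x) := by
    have h := hasGradientAt_innK_self_of_sub_mem_orthogonal hskew hμ le_rfl hμmem
      (fun z => by simp) x
    rw [funext hf, h.gradient, ← mulVecE_add, hP₁P₂ _ (hμmem x)]
  have hgrad₁ (x) : gradient f₁ x = (2 : ℝ) • Complex.I • mulVecE (P₁ (μ x)) x := by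
    refine funext hf₁ ▸ (hasGradientAt_innK_self_of_sub_mem_orthogonal hskew hμ inf_le_left hP₁
      (fun z => ?_) x).gradient
    rw [← eq_sub_of_add_eq' (hP₁P₂ _ (hμmem z))]
    exact (hP₂ z).2
  have hgrad₂ (x) : gradient f₂ x = (2 : ℝ) • Complex.I • mulVecE (P₂ (μ x)) x := by
    refine funext hf₂ ▸ (hasGradientAt_innK_self_of_sub_mem_orthogonal hskew hμ inf_le_left hP₂
      (fun z => ?_) x).gradient
    rw [← eq_sub_of_add_eq (hP₁P₂ _ (hμmem z))]
    exact Submodule.orthogonal_le inf_le_right (𝔨₁.le_orthogonal_orthogonal (hP₁ z))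
  obtain ⟨C, hC, hdom⟩ := exists_norm_toEuclideanCLM_le_of_mem_inf_orthogonal 𝔨 hy
  refine ⟨Metric.ball (‖y‖⁻¹ • y) (3 * C)⁻¹, Metric.isOpen_ball,
    Metric.mem_ball_self (by positivity), 1 / 2, by norm_num, fun x hx hxU => ?_⟩
  have hv : mulVecE (P₁ (μ x)) (‖x‖ • ‖y‖⁻¹ • y) = 0 := by
    rw [mulVecE_real_smul, mulVecE_real_smul, hP₁stab _ (hμmem x), smul_zero, smul_zero]
  have hclose := three_mul_opNorm_mul_norm_sub_le
    (T := Matrix.toEuclideanCLM (𝕜 := ℂ) (P₂ (μ x))) (u := ‖y‖⁻¹ • y) hC (hdom _ (hP₂ x)) hx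
    (by rwa [Metric.mem_ball, dist_eq_norm] at hxU)
  have hsplit := norm_mulVecE_add_norm_mulVecE_le (hskew _ (hP₁ x).1)
    (habelian _ (hP₁ x).1 _ (hP₂ x).1) hv hclose
  have hnorm (w : EuclideanSpace ℂ (Fin n)) : ‖(2 : ℝ) • Complex.I • w‖ = 2 * ‖w‖ := by
    rw [norm_smul, norm_smul, Complex.norm_I, one_mul, Real.norm_two]
  rw [hgrad₀, hgrad₁, hgrad₂, hnorm, hnorm, hnorm]
  linarith

/-- The inductive step: near a direction `y` with nonzero proper
infinitesimal stabilizer `𝔨₁`, splitting `𝔨 = 𝔨₁ ⊕ 𝔨₂` gives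
`‖∇f‖ ≥ c (‖∇f₁‖ + ‖∇f₂‖)`. -/
theorem stmt12 (n : ℕ) (𝔨 : Submodule ℝ (Matrix (Fin n) (Fin n) ℂ))
    (hskew : ∀ ξ ∈ 𝔨, ξᴴ = -ξ)
    (habelian : ∀ ξ ∈ 𝔨, ∀ η ∈ 𝔨, ξ * η = η * ξ)
    (α : Matrix (Fin n) (Fin n) ℂ) (hα : α ∈ 𝔨)
    (μ : EuclideanSpace ℂ (Fin n) → Matrix (Fin n) (Fin n) ℂ)
    (hμmem : ∀ x, μ x ∈ 𝔨)
    (hμ : ∀ x, ∀ ξ ∈ 𝔨,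
      innK (μ x) ξ
        = (1/2) * (inner ℂ (Complex.I • mulVecE ξ x) x : ℂ).re - innK α ξ)
    (f : EuclideanSpace ℂ (Fin n) → ℝ)
    (hf : ∀ x, f x = innK (μ x) (μ x))
    (y : EuclideanSpace ℂ (Fin n)) (hy : y ≠ 0)
    -- `𝔨₁ = {ξ ∈ 𝔨 : ξ y = 0}` is nonzero and proper
    (hstab_ne : ∃ ξ ∈ 𝔨, ξ ≠ 0 ∧ mulVecE ξ y = 0)
    (hstab_proper : ∃ ξ ∈ 𝔨, mulVecE ξ y ≠ 0)
    -- `P₁, P₂` are the orthogonal projections of `𝔨` onto `𝔨₁` and onto `𝔨₂ = 𝔨₁^⊥`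
    (P₁ P₂ : Matrix (Fin n) (Fin n) ℂ → Matrix (Fin n) (Fin n) ℂ)
    (hP₁mem : ∀ ξ ∈ 𝔨, P₁ ξ ∈ 𝔨)
    (hP₁stab : ∀ ξ ∈ 𝔨, mulVecE (P₁ ξ) y = 0)
    (hP₂mem : ∀ ξ ∈ 𝔨, P₂ ξ ∈ 𝔨)
    (hP₂perp : ∀ ξ ∈ 𝔨, ∀ η ∈ 𝔨, mulVecE η y = 0 → innK (P₂ ξ) η = 0)
    (hP₁P₂ : ∀ ξ ∈ 𝔨, P₁ ξ + P₂ ξ = ξ)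
    -- the norm-squares of the two projected moment maps
    (f₁ f₂ : EuclideanSpace ℂ (Fin n) → ℝ)
    (hf₁ : ∀ x, f₁ x = innK (P₁ (μ x)) (P₁ (μ x)))
    (hf₂ : ∀ x, f₂ x = innK (P₂ (μ x)) (P₂ (μ x))) :
    ∃ U : Set (EuclideanSpace ℂ (Fin n)), IsOpen U ∧ ‖y‖⁻¹ • y ∈ U ∧
      ∃ c > (0:ℝ), ∀ x : EuclideanSpace ℂ (Fin n), x ≠ 0 → ‖x‖⁻¹ • x ∈ U →
        ‖gradient f x‖ ≥ c * (‖gradient f₁ x‖ + ‖gradient f₂ x‖) :=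
  stmt12_general n 𝔨 hskew habelian α μ hμmem hμ f hf y hy P₁ P₂ hP₁mem hP₁stab hP₂mem hP₂perp hP₁P₂
    f₁ f₂ hf₁ hf₂
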